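/- arXiv:1507.03789 — 5 statements merged into one kernel-verified Lean document; each statement's English description precedes it below -/
import Mathlib

section
/- Let $A \subset \mathbb{R}^n$ be a nonempty set and let $\gamma : [a,b] \to \mathbb{R}^n$ be a Lipschitz curve. Then the following are equivalent: (i) for every $y \in A$, the function $t \mapsto \|\gamma(t) - y\|$ is nondecreasing on $[a,b]$; (ii) for almost every $t \in [a,b]$, $\langle \gamma'(t), y - \gamma(t) \rangle \le 0$ for every $y \in A$. -/
/-!
Both conditions are statements about the squared distances `φ_y t = ‖γ t - y‖²`, which are
monotone exactly when the distances are, and whose derivative is `-2 ⟪γ' t, y - γ t⟫` wherever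
`γ` is differentiable. If `φ_y` is monotone, its derivative is nonnegative at every interior
point of differentiability, i.e. almost everywhere by Rademacher. Conversely `φ_y` is a product
of Lipschitz functions, hence absolutely continuous, so the fundamental theorem of calculus
`φ_y t - φ_y s = ∫ₛᵗ φ_y'` turns an a.e. nonnegative derivative into monotonicity.
-/

open MeasureTheory Set

lemma MonotoneOn.deriv_nonneg_of_mem_nhds {g : ℝ → ℝ} {s : Set ℝ} {x : ℝ}
    (hg : MonotoneOn g s) (hs : s ∈ nhds x) : 0 ≤ deriv g x := by
  rw [← derivWithin_of_mem_nhds hs]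
  exact hg.derivWithin_nonneg

lemma AbsolutelyContinuousOnInterval.monotoneOn_of_ae_deriv_nonneg {f : ℝ → ℝ} {a b : ℝ}
    (hf : AbsolutelyContinuousOnInterval f a b)
    (hf' : ∀ᵐ t ∂volume.restrict (Icc a b), 0 ≤ deriv f t) : MonotoneOn f (Icc a b) := by
  intro s hs t ht hst
  have hsub : Icc s t ⊆ Icc a b := Icc_subset_Icc hs.1 ht.2
  have hFTC : ∫ u in s..t, deriv f u = f t - f s :=
    (hf.mono (by rwa [uIcc_of_le hst, uIcc_of_le (hs.1.trans hs.2)])).integral_deriv_eq_sub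
  have hpos : 0 ≤ ∫ u in s..t, deriv f u :=
    intervalIntegral.integral_nonneg_of_ae_restrict hst <|
      ae_restrict_of_ae_restrict_of_subset hsub hf'
  linarith

lemma monotoneOn_sq_iff {α : Type*} [Preorder α] {f : α → ℝ} {s : Set α}
    (hf : ∀ x ∈ s, 0 ≤ f x) : MonotoneOn (fun x => f x ^ 2) s ↔ MonotoneOn f s :=
  forall₂_congr fun x hx => forall₂_congr fun y hy => forall_congr' fun _ =>
    pow_le_pow_iff_left₀ (hf x hx) (hf y hy) two_ne_zero

lemma deriv_norm_sub_sq {E : Type*} [NormedAddCommGroup E] [InnerProductSpace ℝ E]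
    {γ : ℝ → E} {t : ℝ} (hγ : DifferentiableAt ℝ γ t) (y : E) :
    deriv (fun u => ‖γ u - y‖ ^ 2) t = -2 * inner ℝ (deriv γ t) (y - γ t) := by
  rw [(hγ.hasDerivAt.sub_const y).norm_sq.deriv, real_inner_comm, ← neg_sub y, inner_neg_right]
  ring

lemma LipschitzWith.absolutelyContinuousOnInterval_norm_sub_sq {E : Type*}
    [NormedAddCommGroup E] {γ : ℝ → E} {L : NNReal} (hγ : LipschitzWith L γ) (y : E) (a b : ℝ) :
    AbsolutelyContinuousOnInterval (fun u => ‖γ u - y‖ ^ 2) a b := by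
  have hdist : LipschitzWith L (fun u => ‖γ u - y‖) := by
    simpa [Function.comp_def, dist_eq_norm] using (LipschitzWith.dist_left y).comp hγ
  have hac := hdist.lipschitzOnWith (s := uIcc a b) |>.absolutelyContinuousOnInterval
  simpa only [sq] using hac.fun_mul hac

theorem stmt_1_general {n : ℕ} (A : Set (EuclideanSpace ℝ (Fin n))) (a b : ℝ)
    (γ : ℝ → EuclideanSpace ℝ (Fin n)) (L : NNReal) (hγ : LipschitzWith L γ) :
    (∀ y ∈ A, MonotoneOn (fun t => ‖γ t - y‖) (Icc a b)) ↔
      (∀ᵐ t ∂(volume.restrict (Icc a b)),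
        ∀ y ∈ A, (inner ℝ (deriv γ t) (y - γ t) : ℝ) ≤ 0) := by
  have hsq (y) := monotoneOn_sq_iff (s := Icc a b) fun t _ => norm_nonneg (γ t - y)
  have hdiff : ∀ᵐ t ∂volume.restrict (Icc a b), DifferentiableAt ℝ γ t :=
    ae_restrict_of_ae hγ.ae_differentiableAt
  constructor
  · intro H
    have hIoo : ∀ᵐ t ∂volume.restrict (Icc a b), t ∈ Ioo a b := by
      rw [← Measure.restrict_congr_set Ioo_ae_eq_Icc]
      exact ae_restrict_mem measurableSet_Ioo
    filter_upwards [hIoo, hdiff] with t ht hd y hy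
    have h := ((hsq y).2 (H y hy)).deriv_nonneg_of_mem_nhds (Icc_mem_nhds ht.1 ht.2)
    rw [deriv_norm_sub_sq hd] at h
    linarith
  · intro H y hy
    refine (hsq y).1 <|
      (hγ.absolutelyContinuousOnInterval_norm_sub_sq y a b).monotoneOn_of_ae_deriv_nonneg ?_
    filter_upwards [H, hdiff] with t ht hd
    rw [deriv_norm_sub_sq hd]
    linarith [ht y hy]

/-- For a Lipschitz curve `γ` and a nonempty set `A ⊆ ℝⁿ`, the distance
`t ↦ ‖γ t - y‖` is nondecreasing on `[a, b]` for every `y ∈ A` iff for almost every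
`t ∈ [a, b]` one has `⟪γ'(t), y - γ(t)⟫ ≤ 0` for every `y ∈ A`
(the distancing-from-`A` property). -/
theorem stmt_1 {n : ℕ} (A : Set (EuclideanSpace ℝ (Fin n))) (hA : A.Nonempty)
    (a b : ℝ) (hab : a ≤ b)
    (γ : ℝ → EuclideanSpace ℝ (Fin n)) (L : NNReal) (hγ : LipschitzWith L γ) :
    (∀ y ∈ A, MonotoneOn (fun t => ‖γ t - y‖) (Icc a b)) ↔
      (∀ᵐ t ∂(volume.restrict (Icc a b)),
        ∀ y ∈ A, (inner ℝ (deriv γ t) (y - γ t) : ℝ) ≤ 0) :=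
  stmt_1_general A a b γ L hγ
end

section
/- Let $K \subset \mathbb{R}^n$ be a nonempty compact convex set and let $\gamma : [a,b] \to \mathbb{R}^n$ be a continuous curve such that (1) for all $a \le t_1 \le t_2 \le t_3 \le b$, $\|\gamma(t_2) - \gamma(t_1)\| \le \|\gamma(t_3) - \gamma(t_1)\|$, and (2) for every $y \in K$ the function $t \mapsto \|\gamma(t) - y\|$ is nondecreasing on $[a,b]$. Then for every $c \in [a,b]$ and every $y$ in the convex hull of $K \cup \gamma([a,c])$, the function $t \mapsto \|\gamma(t) - y\|$ is nondecreasing on $[c,b]$. -/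
/-!
The points `y` whose distance from `γ t` is nondecreasing on an interval form an intersection
of half-spaces `{y | ‖γ t₁ - y‖ ≤ ‖γ t₂ - y‖}`, hence a convex set. It contains `K` by
hypothesis, and each `γ s` with `s ≤ c` by the self-distancing property, so it contains the
convex hull of `K ∪ γ([a,c])`.
-/

open Set

section

variable {E : Type*} [NormedAddCommGroup E] [InnerProductSpace ℝ E]

theorem norm_sub_le_norm_sub_iff_inner (p q y : E) :
    ‖p - y‖ ≤ ‖q - y‖ ↔ inner ℝ (q - p) y ≤ (‖q‖ ^ 2 - ‖p‖ ^ 2) / 2 := by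
  rw [← sq_le_sq₀ (norm_nonneg _) (norm_nonneg _), norm_sub_sq_real, norm_sub_sq_real,
    inner_sub_left]
  constructor <;> intro h <;> linarith

theorem convex_setOf_norm_sub_le_norm_sub (p q : E) : Convex ℝ {y : E | ‖p - y‖ ≤ ‖q - y‖} := by
  simp_rw [norm_sub_le_norm_sub_iff_inner]
  exact convex_halfSpace_le (innerₛₗ ℝ (q - p)).isLinear _

theorem convex_setOf_monotoneOn_norm_sub (γ : ℝ → E) (I : Set ℝ) :
    Convex ℝ {y : E | MonotoneOn (fun t => ‖γ t - y‖) I} := by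
  have hInter : {y : E | MonotoneOn (fun t => ‖γ t - y‖) I} =
      ⋂ t₁ ∈ I, ⋂ t₂ ∈ I, ⋂ (_ : t₁ ≤ t₂), {y | ‖γ t₁ - y‖ ≤ ‖γ t₂ - y‖} := by
    ext; simp [MonotoneOn]
  rw [hInter]
  exact convex_iInter₂ fun _ _ => convex_iInter₂ fun _ _ => convex_iInter fun _ =>
    convex_setOf_norm_sub_le_norm_sub _ _

end

theorem stmt_2_general {n : ℕ} (K : Set (EuclideanSpace ℝ (Fin n)))
    (a b : ℝ) (γ : ℝ → EuclideanSpace ℝ (Fin n))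
    (hsd : ∀ t₁ ∈ Icc a b, ∀ t₂ ∈ Icc a b, ∀ t₃ ∈ Icc a b,
      t₁ ≤ t₂ → t₂ ≤ t₃ → ‖γ t₂ - γ t₁‖ ≤ ‖γ t₃ - γ t₁‖)
    (hK : ∀ y ∈ K, MonotoneOn (fun t => ‖γ t - y‖) (Icc a b)) :
    ∀ c ∈ Icc a b, ∀ y ∈ convexHull ℝ (K ∪ γ '' Icc a c),
      MonotoneOn (fun t => ‖γ t - y‖) (Icc c b) := by
  intro c hc
  refine convexHull_min ?_ (convex_setOf_monotoneOn_norm_sub γ (Icc c b))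
  rintro y (hy | ⟨s, hs, rfl⟩)
  · exact (hK y hy).mono (Icc_subset_Icc_left hc.1)
  · intro t₁ ht₁ t₂ ht₂ h₁₂
    exact hsd s ⟨hs.1, hs.2.trans hc.2⟩ t₁ ⟨hc.1.trans ht₁.1, ht₁.2⟩ t₂
      ⟨hc.1.trans ht₂.1, ht₂.2⟩ (hs.2.trans ht₁.1) h₁₂

/-- If `γ : [a,b] → ℝⁿ` is a continuous self-distancing curve from the
nonempty compact convex set `K` (i.e. it is self-distancing and the distance from every
point of `K` is nondecreasing along `γ`), then for every `c ∈ [a,b]`, the distance from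
every point of the convex hull of `K ∪ γ([a,c])` is nondecreasing along `γ` on `[c,b]`. -/
theorem stmt_2 {n : ℕ} (K : Set (EuclideanSpace ℝ (Fin n)))
    (hne : K.Nonempty) (hcp : IsCompact K) (hcv : Convex ℝ K)
    (a b : ℝ) (γ : ℝ → EuclideanSpace ℝ (Fin n))
    (hcont : ContinuousOn γ (Icc a b))
    (hsd : ∀ t₁ ∈ Icc a b, ∀ t₂ ∈ Icc a b, ∀ t₃ ∈ Icc a b,
      t₁ ≤ t₂ → t₂ ≤ t₃ → ‖γ t₂ - γ t₁‖ ≤ ‖γ t₃ - γ t₁‖)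
    (hK : ∀ y ∈ K, MonotoneOn (fun t => ‖γ t - y‖) (Icc a b)) :
    ∀ c ∈ Icc a b, ∀ y ∈ convexHull ℝ (K ∪ γ '' Icc a c),
      MonotoneOn (fun t => ‖γ t - y‖) (Icc c b) :=
  stmt_2_general K a b γ hsd hK
end

section
/- Let $K \subset \mathbb{R}^2$ be a nonempty compact convex set, let $h : \mathbb{R} \to \mathbb{R}$ be defined by $h(\vartheta) = \sup_{y \in K} \langle (\cos\vartheta, \sin\vartheta), y \rangle$, and let $M = \sup_{y \in K} \|y\|$. Then the function $\vartheta \mapsto h(\vartheta) + \tfrac{M}{2}\vartheta^2$ is convex on $\mathbb{R}$; in particular the support function $h$ is semi-convex. -/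
noncomputable def vec2 (a b : ℝ) : EuclideanSpace ℝ (Fin 2) :=
  (WithLp.equiv 2 (Fin 2 → ℝ)).symm ![a, b]

/-!
Each point `y` of `K` contributes the function `ϑ ↦ ⟪(cos ϑ, sin ϑ), y⟫ + (M/2) ϑ²`, whose second
derivative `M - ⟪(cos ϑ, sin ϑ), y⟫` is nonnegative because `‖y‖ ≤ M`. The function
`ϑ ↦ h ϑ + (M/2) ϑ²` is the pointwise supremum of these convex functions, hence convex.
-/

open Real Set

lemma isLUB_image_add_const {α : Type*} {g : α → ℝ} {s : Set α} {a : ℝ} (h : IsLUB (g '' s) a)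
    (c : ℝ) : IsLUB ((fun x => g x + c) '' s) (a + c) := by
  have := (OrderIso.addRight c).isLUB_image'.2 h
  rwa [image_image] at this

theorem ConvexOn.of_isLUB {𝕜 E β ι : Type*} [Semiring 𝕜] [PartialOrder 𝕜] [AddCommMonoid E]
    [SMul 𝕜 E] [AddCommMonoid β] [PartialOrder β] [IsOrderedAddMonoid β] [Module 𝕜 β]
    [PosSMulMono 𝕜 β] {s : Set E} {I : Set ι} {g : ι → E → β} {f : E → β} (hs : Convex 𝕜 s)
    (hg : ∀ i ∈ I, ConvexOn 𝕜 s (g i)) (hf : ∀ x ∈ s, IsLUB ((fun i => g i x) '' I) (f x)) :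
    ConvexOn 𝕜 s f := by
  refine ⟨hs, fun x hx y hy a b ha hb hab => (hf _ (hs hx hy ha hb hab)).2 ?_⟩
  rintro _ ⟨i, hi, rfl⟩
  calc g i (a • x + b • y) ≤ a • g i x + b • g i y := (hg i hi).2 hx hy ha hb hab
    _ ≤ a • f x + b • f y := by
      gcongr
      exacts [(hf x hx).1 ⟨i, hi, rfl⟩, (hf y hy).1 ⟨i, hi, rfl⟩]

lemma inner_vec2 (a b : ℝ) (y : EuclideanSpace ℝ (Fin 2)) :
    inner ℝ (vec2 a b) y = a * y 0 + b * y 1 := by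
  simp only [vec2, WithLp.equiv_symm_apply, PiLp.inner_apply, RCLike.inner_apply,
    Real.ringHom_apply, Fin.sum_univ_two, Matrix.cons_val_zero, Matrix.cons_val_one]
  ring

lemma norm_vec2_cos_sin (θ : ℝ) : ‖vec2 (cos θ) (sin θ)‖ = 1 := by
  simp [vec2, EuclideanSpace.norm_eq, Fin.sum_univ_two]

lemma convexOn_mul_cos_add_mul_sin_add_sq {a b M : ℝ} (hle : ∀ θ, a * cos θ + b * sin θ ≤ M) :
    ConvexOn ℝ univ (fun θ => a * cos θ + b * sin θ + M / 2 * θ ^ 2) := by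
  refine convexOn_of_hasDerivWithinAt2_nonneg (f' := fun θ => -(a * sin θ) + b * cos θ + M * θ)
    (f'' := fun θ => -(a * cos θ) - b * sin θ + M) convex_univ (by fun_prop) ?_ ?_ ?_ <;>
    simp only [interior_univ, mem_univ, hasDerivWithinAt_univ, forall_const] <;> intro θ
  · exact ((((hasDerivAt_cos θ).const_mul a).add ((hasDerivAt_sin θ).const_mul b)).add
      ((hasDerivAt_pow 2 θ).const_mul (M / 2))).congr_deriv (by push_cast; ring)
  · exact ((((hasDerivAt_sin θ).const_mul a).neg.add ((hasDerivAt_cos θ).const_mul b)).add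
      ((hasDerivAt_id θ).const_mul M)).congr_deriv (by ring)
  · linarith [hle θ]

lemma convexOn_inner_vec2_cos_sin_add_sq {y : EuclideanSpace ℝ (Fin 2)} {M : ℝ} (hy : ‖y‖ ≤ M) :
    ConvexOn ℝ univ (fun θ => inner ℝ (vec2 (cos θ) (sin θ)) y + M / 2 * θ ^ 2) := by
  simp only [inner_vec2, mul_comm (cos _), mul_comm (sin _)]
  refine convexOn_mul_cos_add_mul_sin_add_sq fun θ => ?_
  calc y 0 * cos θ + y 1 * sin θ = inner ℝ (vec2 (cos θ) (sin θ)) y := by rw [inner_vec2]; ring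
    _ ≤ ‖vec2 (cos θ) (sin θ)‖ * ‖y‖ := real_inner_le_norm _ _
    _ ≤ M := by rw [norm_vec2_cos_sin, one_mul]; exact hy

theorem stmt_3_general (K : Set (EuclideanSpace ℝ (Fin 2)))
    (h : ℝ → ℝ)
    (hsupp : ∀ θ : ℝ,
      IsLUB ((fun y => (inner ℝ (vec2 (Real.cos θ) (Real.sin θ)) y : ℝ)) '' K) (h θ))
    (M : ℝ) (hM : IsLUB ((fun y => ‖y‖) '' K) M) :
    ConvexOn ℝ Set.univ (fun θ : ℝ => h θ + M / 2 * θ ^ 2) :=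
  ConvexOn.of_isLUB convex_univ
    (fun y hy => convexOn_inner_vec2_cos_sin_add_sq (hM.1 ⟨y, hy, rfl⟩))
    (fun θ _ => isLUB_image_add_const (hsupp θ) _)

/-- The support function `h(ϑ) = sup_{y ∈ K} ⟪(cos ϑ, sin ϑ), y⟫` of a
nonempty compact convex set `K ⊆ ℝ²` is semi-convex: with `M = sup_{y ∈ K} ‖y‖`, the
function `ϑ ↦ h(ϑ) + (M/2) ϑ²` is convex on `ℝ`. -/
theorem stmt_3 (K : Set (EuclideanSpace ℝ (Fin 2)))
    (hne : K.Nonempty) (hcp : IsCompact K) (hcv : Convex ℝ K)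
    (h : ℝ → ℝ)
    (hsupp : ∀ θ : ℝ,
      IsLUB ((fun y => (inner ℝ (vec2 (Real.cos θ) (Real.sin θ)) y : ℝ)) '' K) (h θ))
    (M : ℝ) (hM : IsLUB ((fun y => ‖y‖) '' K) M) :
    ConvexOn ℝ Set.univ (fun θ : ℝ => h θ + M / 2 * θ ^ 2) :=
  stmt_3_general K h hsupp M hM
end

section
/- Let $K \subset \mathbb{R}^2$ be a compact convex body whose support function $h(\vartheta) = \sup_{y \in K} \langle (\cos\vartheta, \sin\vartheta), y \rangle$ is twice continuously differentiable with $h(\vartheta) + h''(\vartheta) > 0$ for all $\vartheta$. Fix $\vartheta_0 \in \mathbb{R}$ and let $i(\vartheta) = h(\vartheta) n_\vartheta - \big(\int_{\vartheta_0}^{\vartheta} h(\tau)\,d\tau - h'(\vartheta_0)\big) t_\vartheta$ be the left involute of $\partial K$ starting at $i(\vartheta_0)$. Then for every $\vartheta \ge \vartheta_0$, $i(\vartheta + 2\pi) = i(\vartheta) - L\, t_\vartheta$, where $L = \int_{0}^{2\pi} h(\tau)\, d\tau$ is the perimeter of $K$; that is, the involute after a full turn is parallel to itself at distance $L$. -/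
open Real MeasureTheory

/-- The outer normal direction `n_ϑ = (cos ϑ, sin ϑ)`. -/
noncomputable def nvec (θ : ℝ) : EuclideanSpace ℝ (Fin 2) := vec2 (Real.cos θ) (Real.sin θ)

/-- The tangent direction `t_ϑ = (-sin ϑ, cos ϑ)`. -/
noncomputable def tvec (θ : ℝ) : EuclideanSpace ℝ (Fin 2) := vec2 (-Real.sin θ) (Real.cos θ)

/-!
The directions `n_ϑ`, `t_ϑ`, and with them the support function `h`, are `2π`-periodic. Hence
`∫_{ϑ₀}^{ϑ+2π} h` exceeds `∫_{ϑ₀}^{ϑ} h` by the integral of `h` over one full period, which is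
`L`, while every other term of the involute is unchanged by a full turn.
-/

lemma nvec_add_two_pi (θ : ℝ) : nvec (θ + 2 * π) = nvec θ := by
  simp [nvec]

lemma tvec_add_two_pi (θ : ℝ) : tvec (θ + 2 * π) = tvec θ := by
  simp [tvec]

lemma periodic_of_isLUB_inner_nvec {K : Set (EuclideanSpace ℝ (Fin 2))} {h : ℝ → ℝ}
    (hsupp : ∀ θ : ℝ, IsLUB ((fun y => (inner ℝ (nvec θ) y : ℝ)) '' K) (h θ)) :
    Function.Periodic h (2 * π) := fun θ => by
  have hshift := hsupp (θ + 2 * π)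
  rw [nvec_add_two_pi] at hshift
  exact hshift.unique (hsupp θ)

noncomputable def involute (h : ℝ → ℝ) (θ₀ c θ : ℝ) : EuclideanSpace ℝ (Fin 2) :=
  h θ • nvec θ - ((∫ τ in θ₀..θ, h τ) - c) • tvec θ

lemma involute_add_two_pi {h : ℝ → ℝ} (hper : Function.Periodic h (2 * π))
    (hint : ∀ a b, IntervalIntegrable h volume a b) (θ₀ c θ : ℝ) :
    involute h θ₀ c (θ + 2 * π) = involute h θ₀ c θ - (∫ τ in (0:ℝ)..2 * π, h τ) • tvec θ := by
  have hsplit : ∫ τ in θ₀..θ + 2 * π, h τ = (∫ τ in θ₀..θ, h τ) + ∫ τ in (0:ℝ)..2 * π, h τ := by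
    rw [hper.intervalIntegral_add_eq_add θ₀ θ hint, hper.intervalIntegral_add_eq θ₀ 0, zero_add]
  rw [involute, involute, nvec_add_two_pi, tvec_add_two_pi, hper θ, hsplit, sub_sub, ← add_smul]
  congr 2
  ring

theorem stmt_7_general (K : Set (EuclideanSpace ℝ (Fin 2)))
    (h : ℝ → ℝ)
    (hsupp : ∀ θ : ℝ, IsLUB ((fun y => (inner ℝ (nvec θ) y : ℝ)) '' K) (h θ))
    (hsm : ContDiff ℝ 2 h)
    (θ₀ : ℝ) (i : ℝ → EuclideanSpace ℝ (Fin 2))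
    (hi : ∀ θ, i θ = h θ • nvec θ - ((∫ τ in θ₀..θ, h τ) - deriv h θ₀) • tvec θ) :
    ∀ θ, θ₀ ≤ θ →
      i (θ + 2 * Real.pi) = i θ - (∫ τ in (0:ℝ)..(2 * Real.pi), h τ) • tvec θ := by
  intro θ _
  rw [show i = involute h θ₀ (deriv h θ₀) from funext hi]
  exact involute_add_two_pi (periodic_of_isLUB_inner_nvec hsupp)
    (fun a b => hsm.continuous.intervalIntegrable a b) θ₀ (deriv h θ₀) θ

/-- After a full turn the left involute is parallel to itself at distance
`L = ∫_0^{2π} h`, the perimeter of `K`: for all `ϑ ≥ ϑ₀`,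
`i(ϑ + 2π) = i(ϑ) - L t_ϑ`. -/
theorem stmt_7 (K : Set (EuclideanSpace ℝ (Fin 2)))
    (hne : K.Nonempty) (hcp : IsCompact K) (hcv : Convex ℝ K)
    (h : ℝ → ℝ)
    (hsupp : ∀ θ : ℝ, IsLUB ((fun y => (inner ℝ (nvec θ) y : ℝ)) '' K) (h θ))
    (hsm : ContDiff ℝ 2 h) (hpos : ∀ θ, 0 < h θ + deriv (deriv h) θ)
    (θ₀ : ℝ) (i : ℝ → EuclideanSpace ℝ (Fin 2))
    (hi : ∀ θ, i θ = h θ • nvec θ - ((∫ τ in θ₀..θ, h τ) - deriv h θ₀) • tvec θ) :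
    ∀ θ, θ₀ ≤ θ →
      i (θ + 2 * Real.pi) = i θ - (∫ τ in (0:ℝ)..(2 * Real.pi), h τ) • tvec θ :=
  stmt_7_general K h hsupp hsm θ₀ i hi
end

section
/- Let $x_1 = (0,0)$, $x_2 = (0,2)$, $x_3 = (1, 2\sqrt{2})$, $x_4 = (-1, 2\sqrt{2})$ in $\mathbb{R}^2$. Then: (a) the ordered set $\{x_1, x_2, x_3, x_4\}$ is a self-distancing set, i.e. $\|x_j - x_i\| \le \|x_k - x_i\|$ whenever $i \le j \le k$; (b) there is no continuous map $\gamma : [0,1] \to \mathbb{R}^2$ satisfying the self-distancing property and admitting parameters $0 \le t_1 \le t_2 \le t_3 \le t_4 \le 1$ with $\gamma(t_m) = x_m$ for $m = 1, 2, 3, 4$. Hence this self-distancing set is not SDC-extendible. -/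
open Set

@[simp] lemma vec2_apply_zero (a b : ℝ) : vec2 a b 0 = a := rfl
@[simp] lemma vec2_apply_one (a b : ℝ) : vec2 a b 1 = b := rfl

lemma norm_sq_eq_fin_two (p : EuclideanSpace ℝ (Fin 2)) : ‖p‖ ^ 2 = p 0 ^ 2 + p 1 ^ 2 := by
  simp [EuclideanSpace.norm_sq_eq, Fin.sum_univ_two]

noncomputable def examplePoints : Fin 4 → EuclideanSpace ℝ (Fin 2) :=
  ![vec2 0 0, vec2 0 2, vec2 1 (2 * √2), vec2 (-1) (2 * √2)]

lemma examplePoints_selfDistancing (i j k : Fin 4) (hij : i ≤ j) (hjk : j ≤ k) :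
    ‖examplePoints j - examplePoints i‖ ≤ ‖examplePoints k - examplePoints i‖ := by
  rw [← sq_le_sq₀ (norm_nonneg _) (norm_nonneg _), norm_sq_eq_fin_two, norm_sq_eq_fin_two]
  have h2 : √2 ^ 2 = 2 := Real.sq_sqrt zero_le_two
  fin_cases i <;> fin_cases j <;> fin_cases k <;> simp at hij hjk <;>
    simp [examplePoints] <;> nlinarith [Real.sqrt_nonneg 2]

def SelfDistancingOn {E : Type*} [SeminormedAddCommGroup E] (γ : ℝ → E) (S : Set ℝ) : Prop :=
  ∀ t₁ ∈ S, ∀ t₂ ∈ S, ∀ t₃ ∈ S, t₁ ≤ t₂ → t₂ ≤ t₃ → ‖γ t₂ - γ t₁‖ ≤ ‖γ t₃ - γ t₁‖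

lemma SelfDistancingOn.norm_sub_eq_of_le_of_le {E : Type*} [SeminormedAddCommGroup E]
    {γ : ℝ → E} {S : Set ℝ} (hγ : SelfDistancingOn γ S) {a b c s : ℝ}
    (ha : a ∈ S) (hb : b ∈ S) (hc : c ∈ S) (hs : s ∈ S) (hab : a ≤ b) (hbs : b ≤ s) (hsc : s ≤ c)
    (h : ‖γ b - γ a‖ = ‖γ c - γ a‖) : ‖γ s - γ a‖ = ‖γ b - γ a‖ :=
  le_antisymm (h ▸ hγ a ha s hs c hc (hab.trans hbs) hsc) (hγ a ha b hb s hs hab hbs)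

lemma norm_examplePoints_three_sub_eq (i : Fin 4) (hi : i ≤ 1) :
    ‖examplePoints 3 - examplePoints i‖ = ‖examplePoints 2 - examplePoints i‖ := by
  simp only [← sq_eq_sq₀ (norm_nonneg _) (norm_nonneg _), norm_sq_eq_fin_two]
  fin_cases i <;> simp at hi <;> simp [examplePoints]

lemma apply_zero_sq_eq_one_of_norm_sub_examplePoints_eq (p : EuclideanSpace ℝ (Fin 2))
    (h : ∀ i ≤ (1 : Fin 4), ‖p - examplePoints i‖ = ‖examplePoints 2 - examplePoints i‖) :
    p 0 ^ 2 = 1 := by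
  have h₀ := congrArg (· ^ 2) (h 0 (by decide))
  have h₁ := congrArg (· ^ 2) (h 1 le_rfl)
  simp only [norm_sq_eq_fin_two] at h₀ h₁
  simp [examplePoints] at h₀ h₁
  have h2 : √2 ^ 2 = 2 := Real.sq_sqrt zero_le_two
  have hp1 : p 1 = 2 * √2 := by nlinarith
  rw [hp1] at h₀
  nlinarith

lemma not_exists_selfDistancing_through_examplePoints :
    ¬ ∃ (γ : ℝ → EuclideanSpace ℝ (Fin 2)) (t : Fin 4 → ℝ),
        ContinuousOn γ (Icc 0 1) ∧ SelfDistancingOn γ (Icc 0 1) ∧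
        (∀ m, t m ∈ Icc (0:ℝ) 1) ∧ Monotone t ∧ (∀ m, γ (t m) = examplePoints m) := by
  rintro ⟨γ, t, hcont, hγ, ht, htmono, hγt⟩
  have hsub : Icc (t 2) (t 3) ⊆ Icc 0 1 := Icc_subset_Icc (ht 2).1 (ht 3).2
  have hcircles (s) (hs : s ∈ Icc (t 2) (t 3)) : γ s 0 ^ 2 = 1 := by
    refine apply_zero_sq_eq_one_of_norm_sub_examplePoints_eq _ fun i hi => ?_
    rw [← hγt, ← hγt]
    refine hγ.norm_sub_eq_of_le_of_le (ht i) (ht 2) (ht 3) (hsub hs)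
      (htmono (hi.trans (by decide))) hs.1 hs.2 ?_
    simp only [hγt, norm_examplePoints_three_sub_eq i hi]
  have hcont₀ : ContinuousOn (fun s => γ s 0) (Icc (t 2) (t 3)) :=
    (EuclideanSpace.proj (0 : Fin 2)).continuous.comp_continuousOn (hcont.mono hsub)
  obtain ⟨s, hs, hs₀⟩ : ∃ s ∈ Icc (t 2) (t 3), γ s 0 = 0 := by
    refine intermediate_value_Icc' (htmono (by decide)) hcont₀ ⟨?_, ?_⟩ <;>
      simp [hγt, examplePoints]
  simpa [hs₀] using hcircles s hs

/-- Example `si^4`. The four ordered points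
`x₁ = (0,0)`, `x₂ = (0,2)`, `x₃ = (1, 2√2)`, `x₄ = (-1, 2√2)` form a self-distancing set,
but there is no continuous self-distancing curve on `[0,1]` passing through them in this
order: the set is not SDC-extendible. -/
theorem stmt_15 (x : Fin 4 → EuclideanSpace ℝ (Fin 2))
    (hx : x = ![vec2 0 0, vec2 0 2, vec2 1 (2 * Real.sqrt 2),
      vec2 (-1) (2 * Real.sqrt 2)]) :
    (∀ i j k : Fin 4, i ≤ j → j ≤ k → ‖x j - x i‖ ≤ ‖x k - x i‖) ∧
    ¬ ∃ (γ : ℝ → EuclideanSpace ℝ (Fin 2)) (t : Fin 4 → ℝ),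
        ContinuousOn γ (Set.Icc 0 1) ∧
        (∀ t₁ ∈ Set.Icc (0:ℝ) 1, ∀ t₂ ∈ Set.Icc (0:ℝ) 1, ∀ t₃ ∈ Set.Icc (0:ℝ) 1,
          t₁ ≤ t₂ → t₂ ≤ t₃ → ‖γ t₂ - γ t₁‖ ≤ ‖γ t₃ - γ t₁‖) ∧
        (∀ m, t m ∈ Set.Icc (0:ℝ) 1) ∧ Monotone t ∧ (∀ m, γ (t m) = x m) := by
  subst hx
  exact ⟨examplePoints_selfDistancing, not_exists_selfDistancing_through_examplePoints⟩
end
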